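/- arXiv:1501.03649 — 2 statements merged into one kernel-verified Lean document; each statement's English description precedes it below -/
import Mathlib

section
/- Let ⟨P_∧, P_0, P_1, P_∨⟩ be a system of posets with P_i a complete suborder of P_j for i < j in the four-element lattice I₄. Then the system is correct (i.e., any p ∈ P_0 and q ∈ P_1 having compatible reductions in P_∧ are compatible in P_∨) if and only if for every p ∈ P_0, every reduction r ∈ P_∧ of p is also a reduction of p with respect to the pair P_1 ⋖ P_∨. -/
variable {α : Type*} [Preorder α]

/-- `p` and `q` are compatible within `S`. -/
def CompatIn (S : Set α) (p q : α) : Prop := ∃ r ∈ S, r ≤ p ∧ r ≤ q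

/-- `A` is an antichain of the poset `S`. -/
def IsAntichainIn (S A : Set α) : Prop :=
  A ⊆ S ∧ ∀ p ∈ A, ∀ q ∈ A, p ≠ q → ¬ CompatIn S p q

/-- `A` is a maximal antichain of the poset `S`. -/
def IsMaxAntichainIn (S A : Set α) : Prop :=
  IsAntichainIn S A ∧ ∀ p ∈ S, ∃ a ∈ A, CompatIn S a p

/-- `P` is a complete suborder of `Q`. -/
def IsCompleteSuborder (P Q : Set α) : Prop :=
  P ⊆ Q ∧ (∀ p ∈ P, ∀ q ∈ P, ¬ CompatIn P p q → ¬ CompatIn Q p q) ∧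
    ∀ A : Set α, IsMaxAntichainIn P A → IsMaxAntichainIn Q A

/-- `r` is a reduction of `q` with respect to the pair `P ⋖ Q`:
    every extension of `r` in `P` is compatible with `q` in `Q`. -/
def IsReduction (P Q : Set α) (r q : α) : Prop :=
  r ∈ P ∧ q ∈ Q ∧ ∀ p ∈ P, p ≤ r → CompatIn Q p q

lemma compatIn_symm {S : Set α} {p q : α} (h : CompatIn S p q) : CompatIn S q p := by
  obtain ⟨r, hr, h1, h2⟩ := h; exact ⟨r, hr, h2, h1⟩

lemma compatIn_self {S : Set α} {p : α} (hp : p ∈ S) : CompatIn S p p :=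
  ⟨p, hp, le_refl p, le_refl p⟩

/-- Every subset `D` of a poset `S` contains an antichain of `S` that is maximal
    among subsets of `D`: every element of `D` is compatible with some element of it. -/
lemma exists_max_antichain_in (S D : Set α) (hD : D ⊆ S) :
    ∃ A ⊆ D, IsAntichainIn S A ∧ ∀ d ∈ D, ∃ a ∈ A, CompatIn S a d := by
  obtain ⟨A, hA⟩ := zorn_subset {A : Set α | A ⊆ D ∧ IsAntichainIn S A} (by
    intro c hc hchain
    refine ⟨⋃₀ c, ⟨?_, ?_, ?_⟩, fun s hs => Set.subset_sUnion_of_mem hs⟩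
    · exact Set.sUnion_subset fun s hs => (hc hs).1
    · exact Set.sUnion_subset fun s hs => (hc hs).2.1
    · rintro p ⟨s, hs, hps⟩ q ⟨t, ht, hqt⟩ hne
      rcases hchain.total hs ht with h | h
      · exact (hc ht).2.2 p (h hps) q hqt hne
      · exact (hc hs).2.2 p hps q (h hqt) hne)
  obtain ⟨⟨hAD, hAanti⟩, hmax⟩ := hA
  refine ⟨A, hAD, hAanti, fun d hd => ?_⟩
  by_contra hcon
  push_neg at hcon
  have hdA : d ∉ A := fun h => hcon d h (compatIn_self (hD hd))
  have : insert d A ∈ {A : Set α | A ⊆ D ∧ IsAntichainIn S A} := by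
    refine ⟨Set.insert_subset hd hAD, Set.insert_subset (hD hd) hAanti.1, ?_⟩
    rintro p (rfl | hp) q (rfl | hq) hne
    · exact absurd rfl hne
    · exact fun h => hcon q hq (compatIn_symm h)
    · exact fun h => hcon p hp h
    · exact hAanti.2 p hp q hq hne
  exact hdA (hmax this (Set.subset_insert d A) (Set.mem_insert d A))

/-- Key step: if `r ∈ Pm` and `q ∈ P1` with `q ≤ r`, and no `s ≤ r` in `Pm` is a
    reduction of `q` w.r.t. `Pm ⋖ P1`, we derive a contradiction. -/
lemma exists_reduction_below (Pm P1 : Set α) (h1 : IsCompleteSuborder Pm P1)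
    {r q : α} (hr : r ∈ Pm) (hq : q ∈ P1) (hqr : q ≤ r) :
    ∃ s ∈ Pm, s ≤ r ∧ IsReduction Pm P1 s q := by
  by_contra hcon
  push_neg at hcon
  -- D : elements of Pm incompatible (in P1) with q, or incompatible (in Pm) with r
  set D : Set α := {p | p ∈ Pm ∧ (¬ CompatIn P1 p q ∨ ¬ CompatIn Pm p r)} with hDdef
  obtain ⟨A, hAD, hAanti, hAmax⟩ := exists_max_antichain_in Pm D (fun p hp => hp.1)
  -- A is a maximal antichain in Pm
  have hAmaxPm : IsMaxAntichainIn Pm A := by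
    refine ⟨hAanti, fun s hs => ?_⟩
    by_cases hsr : CompatIn Pm s r
    · obtain ⟨t, htm, hts, htr⟩ := hsr
      have hnotred : ¬ IsReduction Pm P1 t q := fun h => hcon t htm htr h
      have : ∃ p ∈ Pm, p ≤ t ∧ ¬ CompatIn P1 p q := by
        by_contra hc; push_neg at hc
        exact hnotred ⟨htm, hq, fun p hp hpt => hc p hp hpt⟩
      obtain ⟨p, hpm, hpt, hpq⟩ := this
      obtain ⟨a, haA, w, hwm, hwa, hwp⟩ := hAmax p ⟨hpm, Or.inl hpq⟩
      exact ⟨a, haA, w, hwm, hwa, hwp.trans (hpt.trans hts)⟩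
    · obtain ⟨a, haA, w, hwm, hwa, hws⟩ := hAmax s ⟨hs, Or.inr (by
        intro ⟨u, hum, hus, hur⟩; exact hsr ⟨u, hum, hus, hur⟩)⟩
      exact ⟨a, haA, w, hwm, hwa, hws⟩
  -- hence A is a maximal antichain in P1
  have hAmaxP1 := h1.2.2 A hAmaxPm
  obtain ⟨a, haA, w, hw1, hwa, hwq⟩ := hAmaxP1.2 q hq
  obtain ⟨ham, hcase⟩ := hAD haA
  rcases hcase with h | h
  · exact h ⟨w, hw1, hwa, hwq⟩
  · exact h1.2.1 a ham r hr h ⟨w, hw1, hwa, hwq.trans hqr⟩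

theorem correct_system_characterization
    (Pm P0 P1 Pv : Set α)
    (h0 : IsCompleteSuborder Pm P0) (h1 : IsCompleteSuborder Pm P1)
    (h2 : IsCompleteSuborder P0 Pv) (h3 : IsCompleteSuborder P1 Pv)
    (h4 : IsCompleteSuborder Pm Pv) :
    -- correctness
    ((∀ p ∈ P0, ∀ q ∈ P1, ∀ r0 r1 : α,
        IsReduction Pm P0 r0 p → IsReduction Pm P1 r1 q →
        CompatIn Pm r0 r1 → CompatIn Pv p q)
    ↔ -- every reduction in P∧ of p ∈ P0 is a reduction of p w.r.t. P1 ⋖ P∨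
      (∀ p ∈ P0, ∀ r : α, IsReduction Pm P0 r p → IsReduction P1 Pv r p)) := by
  constructor
  · intro hcorr p hp r hred
    obtain ⟨hrm, hp0, hext⟩ := hred
    refine ⟨h1.1 hrm, h2.1 hp, fun q hq hqr => ?_⟩
    obtain ⟨s, hsm, hsr, hsred⟩ := exists_reduction_below Pm P1 h1 hrm hq hqr
    have := hcorr p hp q hq r s ⟨hrm, hp0, hext⟩ hsred ⟨s, hsm, hsr, le_refl s⟩
    exact compatIn_symm this
  · intro htrans p hp q hq r0 r1 hred0 hred1 ⟨s, hsm, hs0, hs1⟩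
    obtain ⟨hr1m, _, hext1⟩ := hred1
    -- s ≤ r1 so s compatible with q in P1
    obtain ⟨t, ht1, hts, htq⟩ := hext1 s hsm hs1
    -- r0 is a reduction of p w.r.t. P1 ⋖ Pv, and t ≤ s ≤ r0
    obtain ⟨_, _, hext0⟩ := htrans p hp r0 hred0
    obtain ⟨u, huv, hut, hup⟩ := hext0 t ht1 (hts.trans hs0)
    exact ⟨u, huv, hup, hut.trans htq⟩
end

section
/- Let κ be a measurable cardinal with a κ-complete nonprincipal ultrafilter D on κ, and let P be a partial order. The diagonal map i : P → P^κ/D sending r to the class of the constant sequence ⟨r⟩_{α<κ} preserves order and incompatibility; moreover, i is a complete embedding if and only if P has the κ-chain condition. -/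
open Cardinal

/-- `D` is `κ`-complete. -/
def IsKappaComplete {ι : Type*} (D : Ultrafilter ι) (κ : Cardinal) : Prop :=
  ∀ S : Set (Set ι), #S < κ → (∀ A ∈ S, A ∈ D) → ⋂₀ S ∈ D

section
variable {P : Type*} [Preorder P]

/-- Compatibility in a poset. -/
def Compat (p q : P) : Prop := ∃ r, r ≤ p ∧ r ≤ q

/-- Antichain. -/
def IsAntichainP (A : Set P) : Prop := ∀ p ∈ A, ∀ q ∈ A, p ≠ q → ¬ Compat p q

/-- Maximal antichain. -/
def IsMaxAntichainP (A : Set P) : Prop := IsAntichainP A ∧ ∀ p : P, ∃ a ∈ A, Compat a p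

/-- Complete embedding between posets: preserves order and incompatibility and
    maps maximal antichains to maximal antichains. -/
def IsCompleteEmbedding {Q : Type*} [Preorder Q] (i : P → Q) : Prop :=
  (∀ a b : P, a ≤ b → i a ≤ i b) ∧
  (∀ a b : P, ¬ Compat a b → ¬ Compat (i a) (i b)) ∧
  (∀ A : Set P, IsMaxAntichainP A → IsMaxAntichainP (i '' A))

end

section Aux
variable {P : Type*} [Preorder P]

lemma compat_self (p : P) : Compat p p := ⟨p, le_refl p, le_refl p⟩

lemma compat_symm {p q : P} (h : Compat p q) : Compat q p := by
  obtain ⟨r, h1, h2⟩ := h; exact ⟨r, h2, h1⟩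

/-- Every antichain extends to a maximal antichain. -/
lemma exists_maxAntichain (A : Set P) (hA : IsAntichainP A) :
    ∃ B, A ⊆ B ∧ IsMaxAntichainP B := by
  obtain ⟨M, hAM, hM⟩ := zorn_subset_nonempty {B : Set P | IsAntichainP B}
    (fun c hc hchain _ => by
      refine ⟨⋃₀ c, ?_, fun s hs => Set.subset_sUnion_of_mem hs⟩
      rintro p ⟨s, hs, hps⟩ q ⟨t, ht, hqt⟩ hpq
      rcases hchain.total hs ht with hst | hts
      · exact hc ht p (hst hps) q hqt hpq
      · exact hc hs p hps q (hts hqt) hpq) A hA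
  refine ⟨M, hAM, hM.prop, fun p => ?_⟩
  by_contra hcon
  push_neg at hcon
  have hpM : p ∉ M := fun hp => hcon p hp (compat_self p)
  have : IsAntichainP (insert p M) := by
    rintro x (rfl | hx) y (rfl | hy) hxy
    · exact absurd rfl hxy
    · exact fun hc => hcon y hy (compat_symm hc)
    · exact fun hc => hcon x hx hc
    · exact hM.prop x hx y hy hxy
  have := hM.eq_of_subset this (Set.subset_insert p M)
  exact hpM (this ▸ Set.mem_insert p M)

end Aux

open Classical in
theorem diagonal_embedding_ultrapower
    {ι : Type} (D : Ultrafilter ι)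
    -- κ = #ι is measurable, D is a κ-complete nonprincipal ultrafilter
    (hmeas : ℵ₀ < #ι)
    (hnp : ∀ x : ι, D ≠ pure x)
    (hcomplete : IsKappaComplete D #ι)
    (P : Type) [Preorder P] :
    letI diag : P → Filter.Germ (D : Filter ι) P := fun r => ((fun _ => r) : ι → P)
    (∀ a b : P, a ≤ b → diag a ≤ diag b) ∧
    (∀ a b : P, ¬ Compat a b → ¬ Compat (diag a) (diag b)) ∧
    (IsCompleteEmbedding diag ↔ ∀ A : Set P, IsAntichainP A → #A < #ι) := by
  set diag : P → Filter.Germ (D : Filter ι) P := fun r => ((fun _ => r) : ι → P) with hdiag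
  have hmono : ∀ a b : P, a ≤ b → diag a ≤ diag b := fun a b h =>
    Filter.Germ.coe_le.2 (Filter.Eventually.of_forall fun _ => h)
  have hincompat : ∀ a b : P, ¬ Compat a b → ¬ Compat (diag a) (diag b) := by
    intro a b h
    rintro ⟨r, h1, h2⟩
    induction r using Filter.Germ.inductionOn with
    | h f =>
    rw [Filter.Germ.coe_le] at h1 h2
    obtain ⟨α, hα1, hα2⟩ := (h1.and h2).exists
    exact h ⟨f α, hα1, hα2⟩
  refine ⟨hmono, hincompat, ?_, ?_⟩
  · -- complete embedding → κ-cc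
    rintro ⟨-, -, hmax⟩ A hA
    by_contra hcc
    push_neg at hcc
    obtain ⟨e⟩ : Nonempty (ι ↪ A) := Cardinal.le_def ι A |>.1 hcc
    obtain ⟨B, hAB, hB⟩ := exists_maxAntichain A hA
    have hmaxB := hmax B hB
    set f : ι → P := fun α => (e α : P) with hf
    obtain ⟨x, ⟨a, haB, rfl⟩, r, hr1, hr2⟩ := hmaxB.2 (↑f : Filter.Germ (D : Filter ι) P)
    induction r using Filter.Germ.inductionOn with
    | h g =>
    rw [Filter.Germ.coe_le] at hr1 hr2
    have hS : {α | f α = a} ∈ D := by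
      filter_upwards [hr1, hr2] with α h1 h2
      by_contra hne
      exact hB.1 (f α) (hAB (e α).2) a haB hne ⟨g α, h2, h1⟩
    obtain ⟨x0, hx0⟩ := Filter.nonempty_of_mem (f := (D : Filter ι)) hS
    have hsub : {α | f α = a} ⊆ {x0} := by
      intro y hy
      have : e y = e x0 := Subtype.ext (hy.trans hx0.symm)
      simpa using e.injective this
    have : {x0} ∈ D := D.toFilter.sets_of_superset hS hsub
    exact hnp x0 (Ultrafilter.coe_injective ((D.neBot.eq_pure_iff).2 this))
  · -- κ-cc → complete embedding
    intro hcc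
    refine ⟨hmono, hincompat, ?_⟩
    rintro A ⟨hAac, hAmax⟩
    constructor
    · rintro x ⟨p, hp, rfl⟩ y ⟨q, hq, rfl⟩ hxy
      exact hincompat p q (hAac p hp q hq (fun h => hxy (by rw [h])))
    · intro x
      induction x using Filter.Germ.inductionOn with
      | h f =>
      choose g hg hcompat using fun α => hAmax (f α)
      choose r hr1 hr2 using hcompat
      -- find a ∈ A with {α | g α = a} ∈ D
      have key : ∃ a ∈ A, {α | g α = a} ∈ D := by
        by_contra hcon
        push_neg at hcon
        set S : Set (Set ι) := (fun a : A => {α | g α ≠ (a : P)}) '' Set.univ with hSdef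
        have hcard : #S < #ι := by
          calc #S ≤ #(Set.univ : Set A) := Cardinal.mk_image_le
          _ ≤ #A := Cardinal.mk_le_mk_of_subset (Set.subset_univ _) |>.trans_eq (by simp)
          _ < #ι := hcc A hAac
        have hmem : ∀ T ∈ S, T ∈ D := by
          rintro T ⟨a, -, rfl⟩
          have hc2 : {α | g α = (a : P)}ᶜ ∈ D :=
            (Ultrafilter.compl_mem_iff_notMem).2 (hcon a a.2)
          exact hc2
        have := hcomplete S hcard hmem
        obtain ⟨α, hα⟩ := Filter.nonempty_of_mem this
        exact (hα _ ⟨⟨g α, hg α⟩, Set.mem_univ _, rfl⟩) rfl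
      obtain ⟨a, haA, ha⟩ := key
      refine ⟨diag a, ⟨a, haA, rfl⟩, ?_⟩
      refine ⟨(↑(fun α => if g α = a then r α else f α) : Filter.Germ (D : Filter ι) P), ?_, ?_⟩
      · rw [Filter.Germ.coe_le]
        filter_upwards [ha] with α hα
        simp only [hα, if_pos]
        exact hα ▸ hr1 α
      · rw [Filter.Germ.coe_le]
        filter_upwards [ha] with α hα
        simp only [hα, if_pos]
        exact hr2 α
end
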